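/- Suppose a state ω on a unital C*-algebra satisfies the uniform bound |ω(α_g(A)B) − ω(α_g A)ω(B)| ≤ C‖A‖‖B‖ f(g) for all A, B ∈ 𝔘 and g ∈ G, where f: G → ℝ_{>0} and C > 0. Then for each n ≥ 2 there exists a constant C_n > 0 such that |c_n(α_g A_1, A_2, ..., A_n)| ≤ C_n (Π_{j=1}^n ‖A_j‖) f(g) for all g with f(g) ≤ 1, where c_n is the n-th classical cumulant of ω. -/

import Mathlib

open scoped Classical
open Filter Topology

noncomputable section

/-- `π` is a set-partition of the finite set `S ⊆ ℕ`: a collection of nonempty subsets of `S`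
such that every element of `S` lies in exactly one of them. -/
def IsSetPartition (S : Finset ℕ) (π : Finset (Finset ℕ)) : Prop :=
  (∀ V ∈ π, V ⊆ S) ∧ (∀ V ∈ π, V.Nonempty) ∧ ∀ a ∈ S, ∃! V, V ∈ π ∧ a ∈ V

/-- The finset of all set-partitions of `S`. -/
def setPartitions (S : Finset ℕ) : Finset (Finset (Finset ℕ)) :=
  S.powerset.powerset.filter (IsSetPartition S)

/-- A family of blocks is non-crossing if there are no `a < b < c < d` with `a, c` in one
block and `b, d` in a different block. -/
def IsNonCrossing (π : Finset (Finset ℕ)) : Prop :=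
  ¬ ∃ a b c d : ℕ, a < b ∧ b < c ∧ c < d ∧
      ∃ V ∈ π, ∃ W ∈ π, V ≠ W ∧ a ∈ V ∧ c ∈ V ∧ b ∈ W ∧ d ∈ W

/-- The finset of all non-crossing partitions of `S`. -/
def ncPartitions (S : Finset ℕ) : Finset (Finset (Finset ℕ)) :=
  (setPartitions S).filter IsNonCrossing

variable {𝔘 : Type*}

/-- The ordered list `A_{i_1}, …, A_{i_s}` of observables indexed by `V = {i_1 < ⋯ < i_s}`. -/
def blockList (A : ℕ → 𝔘) (V : Finset ℕ) : List 𝔘 :=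
  (V.sort (· ≤ ·)).map A

/-- The ordered product `A_{i_1} ⋯ A_{i_s}` over the block `V = {i_1 < ⋯ < i_s}`. -/
def blockProd [Monoid 𝔘] (A : ℕ → 𝔘) (V : Finset ℕ) : 𝔘 :=
  (blockList A V).prod

/-- The joint classical cumulant of `ω` of the observables `A_i`, `i ∈ S` (order preserved):
`c(S) = ∑_{π ∈ P(S)} (-1)^{|π|-1}(|π|-1)! ∏_{V ∈ π} ω(∏_{i ∈ V} A_i)`. -/
def cumulant [Monoid 𝔘] (ω : 𝔘 → ℂ) (A : ℕ → 𝔘) (S : Finset ℕ) : ℂ :=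
  ∑ π ∈ setPartitions S,
    (-1 : ℂ) ^ (π.card - 1) * ((π.card - 1).factorial : ℂ) * ∏ V ∈ π, ω (blockProd A V)

/-- `κ` (as a function of the ordered list of observables) is the family of free cumulants of
`ω`: it satisfies the moments-to-free-cumulants formula over non-crossing partitions. -/
def IsFreeCumulantFamily [Monoid 𝔘] (ω : 𝔘 → ℂ) (κ : List 𝔘 → ℂ) : Prop :=
  ∀ (A : ℕ → 𝔘) (S : Finset ℕ), S.Nonempty →
    ω (blockProd A S) = ∑ π ∈ ncPartitions S, ∏ V ∈ π, κ (blockList A V)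

/-- A state on a unital C*-algebra: a positive unital linear functional. -/
structure IsState [NormedRing 𝔘] [StarRing 𝔘] [NormedAlgebra ℂ 𝔘] (ω : 𝔘 →ₗ[ℂ] ℂ) : Prop where
  unital : ω 1 = 1
  positive : ∀ a : 𝔘, 0 ≤ (ω (star a * a)).re ∧ (ω (star a * a)).im = 0

/-- `α` is a representation of the group `G` by *-automorphisms. -/
def IsStarAutoRep {G : Type*} [Monoid G] [Ring 𝔘] [Algebra ℂ 𝔘] [StarRing 𝔘]
    (α : G → 𝔘 ≃⋆ₐ[ℂ] 𝔘) : Prop :=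
  ∀ (g h : G) (x : 𝔘), α (g * h) x = α g (α h x)

/-!
Expand `c_n(α_g A_1, A_2, …, A_n) = ∑_π μ(π) ∏_{V ∈ π} ω(A_V)` with `μ(π) = (-1)^{|π|-1}(|π|-1)!`.
The same sum with `α_g A_1` replaced by `1` is a cumulant with a scalar entry and vanishes for
`n ≥ 2`: a partition of `{1, …, n}` is a partition of `{2, …, n}` with `k` blocks where `1` is
either a new singleton block or joined to one of the `k` blocks, and
`(-1)^k k! + k (-1)^{k-1} (k-1)! = 0`. Subtracting `ω(α_g A_1)` times this zero sum, the term of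
each partition becomes a covariance `ω(α_g A_1 R) - ω(α_g A_1) ω(R)` (with `R` the rest of the
block of `1`) times moments of the other blocks, hence is at most `C (∏ ‖A_j‖) f(g)`.
-/

open Finset

lemma mem_setPartitions {S : Finset ℕ} {π : Finset (Finset ℕ)} :
    π ∈ setPartitions S ↔ IsSetPartition S π := by
  refine mem_filter.trans ⟨And.right, fun h => ⟨?_, h⟩⟩
  exact mem_powerset.2 fun V hV => mem_powerset.2 (h.1 V hV)

namespace IsSetPartition

variable {S : Finset ℕ} {π : Finset (Finset ℕ)} {a : ℕ} {V W : Finset ℕ}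

lemma eq_of_mem_of_mem (hπ : IsSetPartition S π) (hV : V ∈ π) (hW : W ∈ π)
    (haV : a ∈ V) (haW : a ∈ W) : V = W := by
  obtain ⟨U, _, hU⟩ := hπ.2.2 a (hπ.1 V hV haV)
  rw [hU V ⟨hV, haV⟩, hU W ⟨hW, haW⟩]

lemma empty_notMem (hπ : IsSetPartition S π) : ∅ ∉ π :=
  fun h => not_nonempty_empty (hπ.2.1 ∅ h)

lemma notMem_of_mem_erase (hπ : IsSetPartition S π) (hV : V ∈ π) (haV : a ∈ V)
    (hW : W ∈ π.erase V) : a ∉ W :=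
  fun haW => (mem_erase.1 hW).1 (hπ.eq_of_mem_of_mem (mem_of_mem_erase hW) hV haW haV)

lemma filter_mem_eq_singleton (hπ : IsSetPartition S π) (hV : V ∈ π) (haV : a ∈ V) :
    π.filter (a ∈ ·) = {V} := by
  ext W
  simp only [mem_filter, mem_singleton]
  exact ⟨fun ⟨hW, haW⟩ => hπ.eq_of_mem_of_mem hW hV haW haV, fun h => h ▸ ⟨hV, haV⟩⟩

lemma prod_prod {β : Type*} [CommMonoid β] (hπ : IsSetPartition S π) (N : ℕ → β) :
    ∏ V ∈ π, ∏ j ∈ V, N j = ∏ j ∈ S, N j := by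
  have hS : π.biUnion id = S := by
    ext b
    simp only [mem_biUnion, id]
    refine ⟨fun ⟨V, hV, hbV⟩ => hπ.1 V hV hbV, fun hb => ?_⟩
    obtain ⟨V, hV, _⟩ := hπ.2.2 b hb
    exact ⟨V, hV⟩
  rw [← hS, prod_biUnion]
  · rfl
  intro V hV W hW hVW
  exact disjoint_left.2 fun b hbV hbW => hVW (hπ.eq_of_mem_of_mem hV hW hbV hbW)

lemma insert_insert_erase (ha : a ∈ S) (hπ : IsSetPartition (S.erase a) π)
    (hW : W ∈ insert ∅ π) : IsSetPartition S (insert (insert a W) (π.erase W)) := by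
  have hWS : W ⊆ S.erase a := by
    rcases mem_insert.1 hW with rfl | hW
    exacts [empty_subset _, hπ.1 W hW]
  refine ⟨?_, ?_, fun b hb => ?_⟩
  · intro V hV
    rcases mem_insert.1 hV with rfl | hV
    · exact insert_subset ha (hWS.trans (erase_subset _ _))
    · exact (hπ.1 V (mem_of_mem_erase hV)).trans (erase_subset _ _)
  · intro V hV
    rcases mem_insert.1 hV with rfl | hV
    exacts [insert_nonempty _ _, hπ.2.1 V (mem_of_mem_erase hV)]
  by_cases hba : b = a
  · subst hba
    refine ⟨insert b W, ⟨mem_insert_self _ _, mem_insert_self _ _⟩, ?_⟩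
    rintro V ⟨hV, hbV⟩
    rcases mem_insert.1 hV with rfl | hV
    · rfl
    · exact absurd (hπ.1 V (mem_of_mem_erase hV) hbV) (notMem_erase b S)
  obtain ⟨U, ⟨hU, hbU⟩, hUuniq⟩ := hπ.2.2 b (mem_erase.2 ⟨hba, hb⟩)
  by_cases hUW : U = W
  · subst hUW
    refine ⟨insert a U, ⟨mem_insert_self _ _, mem_insert_of_mem hbU⟩, ?_⟩
    rintro V ⟨hV, hbV⟩
    rcases mem_insert.1 hV with rfl | hV
    · rfl
    · exact absurd (hUuniq V ⟨mem_of_mem_erase hV, hbV⟩) (mem_erase.1 hV).1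
  · refine ⟨U, ⟨mem_insert_of_mem (mem_erase.2 ⟨hUW, hU⟩), hbU⟩, ?_⟩
    rintro V ⟨hV, hbV⟩
    rcases mem_insert.1 hV with rfl | hV
    · have hbW : b ∈ W := (mem_insert.1 hbV).resolve_left hba
      have hWπ : W ∈ π := (mem_insert.1 hW).resolve_left (ne_empty_of_mem hbW)
      exact absurd (hUuniq W ⟨hWπ, hbW⟩).symm hUW
    · exact hUuniq V ⟨mem_of_mem_erase hV, hbV⟩

lemma image_erase_erase_empty (hπ : IsSetPartition S π) (a : ℕ) :
    IsSetPartition (S.erase a) ((π.image (·.erase a)).erase ∅) := by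
  refine ⟨?_, ?_, fun b hb => ?_⟩
  · intro V hV
    obtain ⟨U, hU, rfl⟩ := mem_image.1 (mem_of_mem_erase hV)
    exact erase_subset_erase a (hπ.1 U hU)
  · exact fun V hV => nonempty_iff_ne_empty.2 (mem_erase.1 hV).1
  obtain ⟨hba, hbS⟩ := mem_erase.1 hb
  obtain ⟨U, ⟨hU, hbU⟩, hUuniq⟩ := hπ.2.2 b hbS
  have hbU' : b ∈ U.erase a := mem_erase.2 ⟨hba, hbU⟩
  refine ⟨U.erase a, ⟨mem_erase.2 ⟨ne_empty_of_mem hbU', mem_image_of_mem _ hU⟩, hbU'⟩, ?_⟩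
  rintro V ⟨hV, hbV⟩
  obtain ⟨U', hU', rfl⟩ := mem_image.1 (mem_of_mem_erase hV)
  rw [hUuniq U' ⟨hU', mem_of_mem_erase hbV⟩]

end IsSetPartition

/-- `p.2 = ∅` encodes adding `a` as a new singleton block. -/
def insertPoint (a : ℕ) (p : (_ : Finset (Finset ℕ)) × Finset ℕ) : Finset (Finset ℕ) :=
  insert (insert a p.2) (p.1.erase p.2)

def erasePoint (a : ℕ) (π : Finset (Finset ℕ)) : (_ : Finset (Finset ℕ)) × Finset ℕ :=
  ⟨(π.image (·.erase a)).erase ∅, ((π.filter (a ∈ ·)).sup id).erase a⟩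

section PointBijection

variable {S : Finset ℕ} {a : ℕ}

abbrev pointedPartitions (S : Finset ℕ) (a : ℕ) : Finset ((_ : Finset (Finset ℕ)) × Finset ℕ) :=
  (setPartitions (S.erase a)).sigma (insert ∅)

lemma insertPoint_mem_setPartitions (ha : a ∈ S) {p : (_ : Finset (Finset ℕ)) × Finset ℕ}
    (hp : p ∈ pointedPartitions S a) : insertPoint a p ∈ setPartitions S := by
  obtain ⟨hπ, hW⟩ := mem_sigma.1 hp
  exact mem_setPartitions.2 ((mem_setPartitions.1 hπ).insert_insert_erase ha hW)

lemma erasePoint_mem_pointedPartitions (ha : a ∈ S) {π : Finset (Finset ℕ)}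
    (hπ : π ∈ setPartitions S) : erasePoint a π ∈ pointedPartitions S a := by
  have hπ := mem_setPartitions.1 hπ
  obtain ⟨V, ⟨hV, haV⟩, _⟩ := hπ.2.2 a ha
  refine mem_sigma.2 ⟨mem_setPartitions.2 (hπ.image_erase_erase_empty a), ?_⟩
  simp only [erasePoint, hπ.filter_mem_eq_singleton hV haV, sup_singleton, id]
  by_cases hVa : V.erase a = ∅
  · exact hVa ▸ mem_insert_self _ _
  · exact mem_insert_of_mem (mem_erase.2 ⟨hVa, mem_image_of_mem _ hV⟩)

lemma erasePoint_insertPoint {p : (_ : Finset (Finset ℕ)) × Finset ℕ}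
    (hp : p ∈ pointedPartitions S a) : erasePoint a (insertPoint a p) = p := by
  obtain ⟨π, W⟩ := p
  obtain ⟨hπ, hW⟩ := mem_sigma.1 hp
  have hπ := mem_setPartitions.1 hπ
  have haπ : ∀ U ∈ π, a ∉ U := fun U hU haU => notMem_erase a S (hπ.1 U hU haU)
  have haW : a ∉ W := by
    rcases mem_insert.1 hW with rfl | hW
    exacts [notMem_empty a, haπ W hW]
  have hfilter : (insertPoint a ⟨π, W⟩).filter (a ∈ ·) = {insert a W} := by
    rw [insertPoint, filter_insert, if_pos (mem_insert_self a W), filter_false_of_mem]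
    · rfl
    · exact fun U hU => haπ U (mem_of_mem_erase hU)
  have himage : (π.erase W).image (·.erase a) = π.erase W :=
    (image_congr fun U hU => erase_eq_of_notMem (haπ U (mem_of_mem_erase hU))).trans
      image_id'
  rw [erasePoint, hfilter, sup_singleton, id, erase_insert haW]
  simp only [insertPoint, image_insert, erase_insert haW, himage, Sigma.mk.injEq, heq_eq_eq,
    and_true]
  ext U
  simp only [mem_erase, mem_insert]
  constructor
  · rintro ⟨hU0, rfl | ⟨-, hU⟩⟩
    exacts [(mem_insert.1 hW).resolve_left hU0, hU]
  · intro hU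
    refine ⟨ne_of_mem_of_not_mem hU hπ.empty_notMem, ?_⟩
    by_cases hUW : U = W
    exacts [Or.inl hUW, Or.inr ⟨hUW, hU⟩]

lemma insertPoint_erasePoint (ha : a ∈ S) {π : Finset (Finset ℕ)} (hπ : π ∈ setPartitions S) :
    insertPoint a (erasePoint a π) = π := by
  have hπ := mem_setPartitions.1 hπ
  obtain ⟨V, ⟨hV, haV⟩, _⟩ := hπ.2.2 a ha
  simp only [insertPoint, erasePoint, hπ.filter_mem_eq_singleton hV haV, sup_singleton, id,
    insert_erase haV]
  suffices h : ((π.image (·.erase a)).erase ∅).erase (V.erase a) = π.erase V by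
    rw [h, insert_erase hV]
  ext U
  simp only [mem_erase, mem_image]
  constructor
  · rintro ⟨hUV, hU0, U', hU', rfl⟩
    have hU'V : U' ≠ V := fun h => hUV (h ▸ rfl)
    rw [erase_eq_of_notMem (hπ.notMem_of_mem_erase hV haV (mem_erase.2 ⟨hU'V, hU'⟩))]
    exact ⟨hU'V, hU'⟩
  · rintro ⟨hUV, hU⟩
    have haU := hπ.notMem_of_mem_erase hV haV (mem_erase.2 ⟨hUV, hU⟩)
    obtain ⟨b, hbU⟩ := hπ.2.1 U hU
    refine ⟨fun h => hUV (hπ.eq_of_mem_of_mem hU hV hbU (mem_of_mem_erase (h ▸ hbU))),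
      ne_empty_of_mem hbU, U, hU, erase_eq_of_notMem haU⟩

end PointBijection

/-- The Möbius function of the partition lattice between a partition with `k` blocks and the
one-block partition. -/
def cumulantCoeff (k : ℕ) : ℂ :=
  (-1) ^ (k - 1) * ((k - 1).factorial : ℂ)

lemma norm_cumulantCoeff (k : ℕ) : ‖cumulantCoeff k‖ = ((k - 1).factorial : ℝ) := by
  simp [cumulantCoeff]

lemma cumulantCoeff_succ_add_mul (k : ℕ) (hk : 1 ≤ k) :
    cumulantCoeff (k + 1) + k * cumulantCoeff k = 0 := by
  obtain ⟨m, rfl⟩ := Nat.exists_eq_add_of_le' hk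
  simp only [cumulantCoeff, Nat.add_sub_cancel, Nat.factorial_succ]
  push_cast
  ring

lemma cumulant_eq_sum_cumulantCoeff [Monoid 𝔘] (ω : 𝔘 → ℂ) (A : ℕ → 𝔘) (S : Finset ℕ) :
    cumulant ω A S = ∑ π ∈ setPartitions S, cumulantCoeff π.card * ∏ V ∈ π, ω (blockProd A V) :=
  rfl

section Vanishing

variable {S : Finset ℕ} {a : ℕ} {χ : Finset ℕ → ℂ}

lemma sum_insertPoint_eq_zero (hχa : χ {a} = 1) (hχ : ∀ V, a ∉ V → χ (insert a V) = χ V)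
    {π : Finset (Finset ℕ)} (hπ : IsSetPartition (S.erase a) π) (hS : (S.erase a).Nonempty) :
    ∑ W ∈ insert ∅ π, cumulantCoeff (insertPoint a ⟨π, W⟩).card *
      ∏ V ∈ insertPoint a ⟨π, W⟩, χ V = 0 := by
  have haπ : ∀ U ∈ π, a ∉ U := fun U hU haU => notMem_erase a S (hπ.1 U hU haU)
  have hsingleton : {a} ∉ π := fun h => haπ _ h (mem_singleton_self a)
  have hnew : insertPoint a ⟨π, ∅⟩ = insert {a} π := by
    rw [insertPoint, erase_eq_of_notMem hπ.empty_notMem]; rfl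
  have hjoin : ∀ W ∈ π, (insertPoint a ⟨π, W⟩).card = π.card ∧
      ∏ V ∈ insertPoint a ⟨π, W⟩, χ V = ∏ V ∈ π, χ V := by
    intro W hW
    have hnotMem : insert a W ∉ π.erase W :=
      fun h => haπ _ (mem_of_mem_erase h) (mem_insert_self a W)
    rw [insertPoint, card_insert_of_notMem hnotMem, card_erase_add_one hW,
      prod_insert hnotMem, hχ W (haπ W hW), mul_prod_erase π χ hW]
    exact ⟨rfl, rfl⟩
  have hcard : 1 ≤ π.card := by
    obtain ⟨b, hb⟩ := hS
    obtain ⟨U, ⟨hU, _⟩, _⟩ := hπ.2.2 b hb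
    exact card_pos.2 ⟨U, hU⟩
  rw [sum_insert hπ.empty_notMem, sum_congr rfl fun W hW => by rw [(hjoin W hW).1,
    (hjoin W hW).2], sum_const, nsmul_eq_mul, hnew, card_insert_of_notMem hsingleton,
    prod_insert hsingleton, hχa, one_mul, ← mul_assoc, ← add_mul,
    cumulantCoeff_succ_add_mul _ hcard, zero_mul]

theorem sum_cumulantCoeff_mul_prod_eq_zero (ha : a ∈ S) (hS : (S.erase a).Nonempty)
    (hχa : χ {a} = 1) (hχ : ∀ V, a ∉ V → χ (insert a V) = χ V) :
    ∑ π ∈ setPartitions S, cumulantCoeff π.card * ∏ V ∈ π, χ V = 0 := by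
  rw [Finset.sum_nbij' (erasePoint a) (insertPoint a)
    (fun π hπ => erasePoint_mem_pointedPartitions ha hπ)
    (fun p hp => insertPoint_mem_setPartitions ha hp)
    (fun π hπ => insertPoint_erasePoint ha hπ) (fun p hp => erasePoint_insertPoint hp)
    (g := fun p => cumulantCoeff (insertPoint a p).card * ∏ V ∈ insertPoint a p, χ V)
    (fun π hπ => by rw [insertPoint_erasePoint ha hπ]), sum_sigma]
  exact sum_eq_zero fun π hπ => sum_insertPoint_eq_zero hχa hχ (mem_setPartitions.1 hπ) hS

end Vanishing

lemma blockProd_empty [Monoid 𝔘] (A : ℕ → 𝔘) : blockProd A ∅ = 1 := by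
  simp [blockProd, blockList]

lemma blockProd_eq_mul_blockProd_erase [Monoid 𝔘] (A : ℕ → 𝔘) {V : Finset ℕ} {a : ℕ}
    (haV : a ∈ V) (hV : ∀ j ∈ V, a ≤ j) : blockProd A V = A a * blockProd A (V.erase a) := by
  conv_lhs => rw [← insert_erase haV]
  rw [blockProd, blockList, sort_insert _ (fun j hj => hV j (mem_of_mem_erase hj))
    (notMem_erase a V)]
  rfl

lemma norm_blockProd_le [NormedRing 𝔘] [NormOneClass 𝔘] (A : ℕ → 𝔘) (V : Finset ℕ) :
    ‖blockProd A V‖ ≤ ∏ j ∈ V, ‖A j‖ := by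
  refine (List.norm_prod_le _).trans_eq ?_
  rw [blockList, List.map_map, ← Multiset.prod_coe, ← Multiset.map_coe, Finset.sort_eq]
  rfl

section CovarianceBound

variable [NormedRing 𝔘] [NormOneClass 𝔘] {ω : 𝔘 → ℂ} {A : ℕ → 𝔘} {S : Finset ℕ} {a : ℕ}
  {c : ℝ}

lemma norm_prod_sub_mul_prod_le (hω : ∀ X, ‖ω X‖ ≤ ‖X‖) (hc : 0 ≤ c)
    (hcov : ∀ R, ‖ω (A a * R) - ω (A a) * ω R‖ ≤ c * ‖A a‖ * ‖R‖)
    (ha : a ∈ S) (hS : ∀ j ∈ S, a ≤ j) {π : Finset (Finset ℕ)} (hπ : IsSetPartition S π) :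
    ‖∏ V ∈ π, ω (blockProd A V) - ω (A a) * ∏ V ∈ π, ω (blockProd A (V.erase a))‖ ≤
      c * ∏ j ∈ S, ‖A j‖ := by
  obtain ⟨V, ⟨hV, haV⟩, _⟩ := hπ.2.2 a ha
  have hrest : ∏ U ∈ π.erase V, ω (blockProd A (U.erase a)) =
      ∏ U ∈ π.erase V, ω (blockProd A U) :=
    prod_congr rfl fun U hU => by rw [erase_eq_of_notMem (hπ.notMem_of_mem_erase hV haV hU)]
  have hnorm_rest : ‖∏ U ∈ π.erase V, ω (blockProd A U)‖ ≤ ∏ U ∈ π.erase V, ∏ j ∈ U, ‖A j‖ := by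
    rw [norm_prod]
    exact prod_le_prod (fun _ _ => norm_nonneg _)
      fun U _ => (hω _).trans (norm_blockProd_le A U)
  set R := blockProd A (V.erase a)
  rw [← mul_prod_erase π _ hV, ← mul_prod_erase π (fun U => ω (blockProd A (U.erase a))) hV,
    hrest, blockProd_eq_mul_blockProd_erase A haV fun j hj => hS j (hπ.1 V hV hj), ← mul_assoc,
    ← sub_mul, norm_mul, ← hπ.prod_prod, ← mul_prod_erase π _ hV, ← mul_prod_erase V _ haV]
  calc ‖ω (A a * R) - ω (A a) * ω R‖ * ‖∏ U ∈ π.erase V, ω (blockProd A U)‖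
      ≤ (c * ‖A a‖ * ∏ j ∈ V.erase a, ‖A j‖) * ∏ U ∈ π.erase V, ∏ j ∈ U, ‖A j‖ := by
        gcongr
        exact (hcov R).trans (by gcongr; exact norm_blockProd_le A _)
    _ = c * ((‖A a‖ * ∏ j ∈ V.erase a, ‖A j‖) * ∏ U ∈ π.erase V, ∏ j ∈ U, ‖A j‖) := by ring

theorem norm_cumulant_le (hω1 : ω 1 = 1) (hω : ∀ X, ‖ω X‖ ≤ ‖X‖) (hc : 0 ≤ c)
    (hcov : ∀ R, ‖ω (A a * R) - ω (A a) * ω R‖ ≤ c * ‖A a‖ * ‖R‖)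
    (ha : a ∈ S) (hS : ∀ j ∈ S, a ≤ j) (hS' : (S.erase a).Nonempty) :
    ‖cumulant ω A S‖ ≤
      (∑ π ∈ setPartitions S, ((π.card - 1).factorial : ℝ)) * c * ∏ j ∈ S, ‖A j‖ := by
  have hzero := sum_cumulantCoeff_mul_prod_eq_zero ha hS'
    (χ := fun V => ω (blockProd A (V.erase a))) (by simp [blockProd_empty, hω1])
    (fun V haV => by simp only [erase_insert haV, erase_eq_of_notMem haV])
  have hsplit : cumulant ω A S = ∑ π ∈ setPartitions S, cumulantCoeff π.card *
      (∏ V ∈ π, ω (blockProd A V) - ω (A a) * ∏ V ∈ π, ω (blockProd A (V.erase a))) := by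
    simp only [mul_sub, sum_sub_distrib, cumulant_eq_sum_cumulantCoeff, mul_left_comm _ (ω (A a)),
      ← mul_sum, hzero, mul_zero, sub_zero]
  rw [hsplit, sum_mul, sum_mul]
  refine (norm_sum_le _ _).trans (sum_le_sum fun π hπ => ?_)
  rw [norm_mul, norm_cumulantCoeff, mul_assoc]
  exact mul_le_mul_of_nonneg_left
    (norm_prod_sub_mul_prod_le hω hc hcov ha hS (mem_setPartitions.1 hπ)) (Nat.cast_nonneg _)

end CovarianceBound

theorem cumulant_uniform_bound_general {G : Type*}
    [NormedRing 𝔘] [StarRing 𝔘] [CStarRing 𝔘] [NormedAlgebra ℂ 𝔘]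
    (α : G → 𝔘 ≃⋆ₐ[ℂ] 𝔘)
    (ω : 𝔘 →ₗ[ℂ] ℂ) (hω : IsState ω) (hωb : ∀ X : 𝔘, ‖ω X‖ ≤ ‖X‖)
    (hiso : ∀ (x : G) (A : 𝔘), ‖α x A‖ = ‖A‖)
    (f : G → ℝ) (hf : ∀ x : G, 0 < f x) (C : ℝ) (hC : 0 < C)
    (hcl : ∀ (x : G) (A B : 𝔘),
      ‖ω (α x A * B) - ω (α x A) * ω B‖ ≤ C * ‖A‖ * ‖B‖ * f x) :
    ∀ n, 2 ≤ n → ∃ Cn : ℝ, 0 < Cn ∧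
      ∀ x : G, f x ≤ 1 → ∀ A : ℕ → 𝔘,
        ‖cumulant ⇑ω (Function.update A 1 (α x (A 1))) (Finset.Icc 1 n)‖ ≤
          Cn * (∏ j ∈ Finset.Icc 1 n, ‖A j‖) * f x := by
  intro n hn
  have : Nontrivial 𝔘 := ⟨0, 1, fun h => by simpa [← h] using hω.unital⟩
  have : NormOneClass 𝔘 := ⟨CStarRing.norm_one⟩
  set B := ∑ π ∈ setPartitions (Icc 1 n), ((π.card - 1).factorial : ℝ)
  have hB : 0 ≤ B := sum_nonneg fun _ _ => Nat.cast_nonneg _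
  refine ⟨C * (B + 1), by positivity, fun x _ A => ?_⟩
  set A' := Function.update A 1 (α x (A 1))
  have hA' : ∀ j, ‖A' j‖ = ‖A j‖ := fun j => by
    by_cases hj : j = 1
    · simp [A', hj, hiso]
    · simp [A', hj]
  have hcov : ∀ R, ‖ω (A' 1 * R) - ω (A' 1) * ω R‖ ≤ C * f x * ‖A' 1‖ * ‖R‖ := fun R => by
    simpa only [A', Function.update_self, hiso, mul_right_comm _ (f x)] using hcl x (A 1) R
  have hfx := (hf x).le
  calc ‖cumulant ω A' (Icc 1 n)‖ ≤ B * (C * f x) * ∏ j ∈ Icc 1 n, ‖A' j‖ :=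
        norm_cumulant_le hω.unital hωb (by positivity) hcov (mem_Icc.2 ⟨le_rfl, by omega⟩)
          (fun j hj => (mem_Icc.1 hj).1) ⟨2, mem_erase.2 ⟨by norm_num, mem_Icc.2 ⟨by norm_num, hn⟩⟩⟩
    _ = C * B * (∏ j ∈ Icc 1 n, ‖A j‖) * f x := by simp only [hA']; ring
    _ ≤ C * (B + 1) * (∏ j ∈ Icc 1 n, ‖A j‖) * f x := by gcongr; linarith

/-- a uniform bound C‖A‖‖B‖f(g) on the covariance implies, for each n ≥ 2, a
bound C_n (∏‖A_j‖) f(g) on the n-th classical cumulant with the first argument translated,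
for all g with f(g) ≤ 1. -/
theorem cumulant_uniform_bound {G : Type*} [Group G]
    [NormedRing 𝔘] [StarRing 𝔘] [CStarRing 𝔘] [NormedAlgebra ℂ 𝔘] [StarModule ℂ 𝔘]
    [CompleteSpace 𝔘]
    (α : G → 𝔘 ≃⋆ₐ[ℂ] 𝔘) (hα : IsStarAutoRep α)
    (ω : 𝔘 →ₗ[ℂ] ℂ) (hω : IsState ω) (hωb : ∀ X : 𝔘, ‖ω X‖ ≤ ‖X‖)
    (hiso : ∀ (x : G) (A : 𝔘), ‖α x A‖ = ‖A‖)
    (f : G → ℝ) (hf : ∀ x : G, 0 < f x) (C : ℝ) (hC : 0 < C)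
    (hcl : ∀ (x : G) (A B : 𝔘),
      ‖ω (α x A * B) - ω (α x A) * ω B‖ ≤ C * ‖A‖ * ‖B‖ * f x) :
    ∀ n, 2 ≤ n → ∃ Cn : ℝ, 0 < Cn ∧
      ∀ x : G, f x ≤ 1 → ∀ A : ℕ → 𝔘,
        ‖cumulant ⇑ω (Function.update A 1 (α x (A 1))) (Finset.Icc 1 n)‖ ≤
          Cn * (∏ j ∈ Finset.Icc 1 n, ‖A j‖) * f x :=
  cumulant_uniform_bound_general α ω hω hωb hiso f hf C hC hcl
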